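/- For fixed x ∈ (1/2, 1), if k_p is a sequence of integers with k_p ~ x·p as p → ∞, then the transition probability b(p, k_p) := 2·Z(p - k_p + 1)·Z(k_p)/Z(p) satisfies b(p, k_p) ~ (2t/p^{5/2})·(x(1-x))^{-5/2} as p → ∞, where t = √3/(8√π). -/

import Mathlib

open Asymptotics Filter

/-- `Z(1) = (2-√3)/4` and `Z(p) = 6^p·(2p-5)!!/(8√3·p!)` for `p ≥ 2`. -/
noncomputable def Zfun : ℕ → ℝ := fun p =>
  if p = 1 then (2 - Real.sqrt 3) / 4
  else 6 ^ p * Nat.doubleFactorial (2 * p - 5) / (8 * Real.sqrt 3 * Nat.factorial p)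

/-!
Stirling's formula gives `C(2m, m) ~ 4^m / √(π m)`, and since `(2m-1)‼ = C(2m, m) m! / 2^m`,
`Z(p) = 6^p (2p-5)‼ / (8√3 p!)` behaves like `c · 12^p · p^(-5/2)` with `c = √3 / (96 √π)`.
For any sequence of this shape, `Z(q) Z(k) / Z(p)` with `q + k = p + 1`, `q ~ (1-x) p`, `k ~ x p`
is asymptotic to `12 c (x (1-x))^(-5/2) p^(-5/2)`: the geometric factors cancel up to one `12`,
and the power factors combine to `(p / (q k))^(5/2)`.
-/

open Real Nat Topology

theorem centralBinom_isEquivalent :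
    (fun n : ℕ ↦ (n.centralBinom : ℝ)) ~[atTop] fun n ↦ 4 ^ n / √(π * n) := by
  have hS := Stirling.factorial_isEquivalent_stirling
  have h := (hS.comp_tendsto (tendsto_id.const_mul_atTop' two_pos)).div (hS.mul hS)
  refine (h.congr_left ?_).congr_right ?_
  · refine Eventually.of_forall fun n ↦ ?_
    simp only [Function.comp_apply, Pi.div_apply, Pi.mul_apply, id]
    rw [centralBinom_eq_two_mul_choose, Nat.cast_choose ℝ (by omega), two_mul, Nat.add_sub_cancel]
  · filter_upwards [eventually_gt_atTop 0] with n hn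
    have hsqrt₂ : √(2 * ↑(2 * n) * π) = 2 * √(π * n) := by
      rw [show (2 : ℝ) * ↑(2 * n) * π = 2 ^ 2 * (π * n) by push_cast; ring,
        Real.sqrt_mul (by positivity), Real.sqrt_sq two_pos.le]
    have hsqrt₁ : √(2 * n * π) = √2 * √(π * n) := by
      rw [← Real.sqrt_mul zero_le_two]; ring_nf
    have hpow : ((↑(2 * n) : ℝ) / rexp 1) ^ (2 * n) = 4 ^ n * ((n / rexp 1) ^ n) ^ 2 := by
      push_cast
      rw [mul_div_assoc, mul_pow, pow_mul, mul_comm 2 n, pow_mul (_ / _) n 2]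
      norm_num
    simp only [Function.comp_apply, Pi.div_apply, Pi.mul_apply, id]
    rw [hsqrt₂, hsqrt₁, hpow]
    field_simp
    exact (Real.sq_sqrt zero_le_two).symm

theorem factorial_two_mul_eq_doubleFactorial_mul (n : ℕ) :
    (2 * n)! = (2 * n)‼ * (2 * n - 1)‼ := by
  cases n with
  | zero => rfl
  | succ n =>
    rw [show 2 * (n + 1) = 2 * n + 1 + 1 by ring]
    exact factorial_eq_mul_doubleFactorial _

theorem doubleFactorial_two_mul_sub_one_mul_two_pow (n : ℕ) :
    (2 * n - 1)‼ * 2 ^ n = n.centralBinom * n ! := by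
  apply Nat.eq_of_mul_eq_mul_right (factorial_pos n)
  have h := choose_mul_factorial_mul_factorial (Nat.le_mul_of_pos_left n two_pos)
  rw [two_mul n, Nat.add_sub_cancel, ← two_mul] at h
  rw [centralBinom_eq_two_mul_choose, mul_assoc, ← doubleFactorial_two_mul, mul_comm,
    ← factorial_two_mul_eq_doubleFactorial_mul, h]

theorem natCast_add_isEquivalent (c : ℝ) : (fun n : ℕ ↦ (n : ℝ) + c) ~[atTop] fun n ↦ (n : ℝ) :=
  IsEquivalent.refl.add_const_of_norm_tendsto_atTop
    (tendsto_norm_atTop_atTop.comp tendsto_natCast_atTop_atTop)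

theorem rpow_neg_five_div_two {t : ℝ} (ht : 0 < t) : t ^ (-(5 / 2 : ℝ)) = (t ^ 2 * √t)⁻¹ := by
  rw [rpow_neg ht.le, show (5 / 2 : ℝ) = 2 + 1 / 2 by norm_num, rpow_add ht, rpow_two,
    sqrt_eq_rpow]

theorem tendsto_atTop_of_tendsto_div_natCast {q : ℕ → ℕ} {y : ℝ}
    (hq : Tendsto (fun p ↦ (q p : ℝ) / p) atTop (𝓝 y)) (hy : 0 < y) :
    Tendsto q atTop atTop := by
  rw [← tendsto_natCast_atTop_iff (R := ℝ)]
  refine (hq.pos_mul_atTop hy tendsto_natCast_atTop_atTop).congr' ?_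
  filter_upwards [eventually_gt_atTop 0] with p hp
  field_simp

theorem tendsto_div_natCast_of_isEquivalent {u : ℕ → ℝ} {x : ℝ}
    (hu : u ~[atTop] fun p ↦ x * p) : Tendsto (fun p ↦ u p / p) atTop (𝓝 x) := by
  refine ((hu.div (IsEquivalent.refl (u := fun p : ℕ ↦ (p : ℝ)))).congr_right ?_).tendsto_const
  filter_upwards [eventually_gt_atTop 0] with p hp
  simp [(Nat.cast_pos.mpr hp).ne']

theorem eventually_lt_of_tendsto_div_natCast {k : ℕ → ℕ} {x : ℝ}
    (hk : Tendsto (fun p ↦ (k p : ℝ) / p) atTop (𝓝 x)) (hx : x < 1) :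
    ∀ᶠ p in atTop, k p < p := by
  filter_upwards [hk.eventually_lt_const hx, eventually_gt_atTop 0] with p hlt hp
  exact_mod_cast (div_lt_one (Nat.cast_pos.mpr hp)).mp hlt

theorem tendsto_sub_add_one_div_natCast {k : ℕ → ℕ} {x : ℝ}
    (hk : Tendsto (fun p ↦ (k p : ℝ) / p) atTop (𝓝 x)) (hx : x < 1) :
    Tendsto (fun p ↦ ((p - k p + 1 : ℕ) : ℝ) / p) atTop (𝓝 (1 - x)) := by
  have h : Tendsto (fun p : ℕ ↦ 1 - (k p : ℝ) / p + 1 / p) atTop (𝓝 (1 - x + 0)) :=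
    (tendsto_const_nhds.sub hk).add tendsto_one_div_atTop_nhds_zero_nat
  rw [add_zero] at h
  refine h.congr' ?_
  filter_upwards [eventually_lt_of_tendsto_div_natCast hk hx] with p hlt
  have hp : (0 : ℝ) < p := by exact_mod_cast (Nat.zero_le _).trans_lt hlt
  rw [Nat.cast_add, Nat.cast_sub hlt.le]
  field_simp
  ring

theorem isEquivalent_mul_div_of_add_eq_succ {f : ℕ → ℝ} {C r a x y : ℝ}
    (hf : f ~[atTop] fun n ↦ C * r ^ n * (n : ℝ) ^ (-a)) (hC : C ≠ 0) (hr : r ≠ 0)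
    {q k : ℕ → ℕ} (hqk : ∀ᶠ p in atTop, q p + k p = p + 1)
    (hq : Tendsto (fun p ↦ (q p : ℝ) / p) atTop (𝓝 y))
    (hk : Tendsto (fun p ↦ (k p : ℝ) / p) atTop (𝓝 x)) (hy : 0 < y) (hx : 0 < x) :
    (fun p ↦ f (q p) * f (k p) / f p) ~[atTop]
      fun p ↦ C * r * (y * x) ^ (-a) * (p : ℝ) ^ (-a) := by
  have hf' := ((hf.comp_tendsto (tendsto_atTop_of_tendsto_div_natCast hq hy)).mul
    (hf.comp_tendsto (tendsto_atTop_of_tendsto_div_natCast hk hx))).div hf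
  have hlim : Tendsto (fun p ↦ C * r * ((q p / p) * (k p / p) : ℝ) ^ (-a)) atTop
      (𝓝 (C * r * (y * x) ^ (-a))) :=
    ((hq.mul hk).rpow_const (Or.inl (mul_pos hy hx).ne')).const_mul _
  have hconst := (isEquivalent_const_iff_tendsto
    (mul_ne_zero (mul_ne_zero hC hr) (rpow_pos_of_pos (mul_pos hy hx) _).ne')).mpr hlim
  refine hf'.trans_eventuallyEq ?_ |>.trans (hconst.mul IsEquivalent.refl)
  filter_upwards [hqk, eventually_gt_atTop 0] with p hp hp₀
  have hp' : (0 : ℝ) < p := Nat.cast_pos.mpr hp₀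
  have hr' : r ^ q p * r ^ k p = r * r ^ p := by rw [← pow_add, hp, pow_succ, mul_comm]
  simp only [Function.comp_apply, Pi.div_apply, Pi.mul_apply]
  rw [mul_rpow (by positivity) (by positivity), div_rpow (by positivity) hp'.le,
    div_rpow (by positivity) hp'.le]
  field_simp
  linear_combination ((q p : ℝ) ^ (-a) * (k p : ℝ) ^ (-a)) * hr'

theorem Zfun_add_two (m : ℕ) :
    Zfun (m + 2) = 6 ^ (m + 2) * m.centralBinom / (8 * √3 * 2 ^ m * ((m + 1) * (m + 2))) := by
  have h : ((2 * m - 1)‼ : ℝ) * 2 ^ m = m.centralBinom * m ! := by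
    exact_mod_cast doubleFactorial_two_mul_sub_one_mul_two_pow m
  rw [Zfun, if_neg (by omega), show 2 * (m + 2) - 5 = 2 * m - 1 by omega, factorial_succ,
    factorial_succ]
  push_cast
  field_simp
  linear_combination ((m : ℝ) + 2) * h

theorem Zfun_isEquivalent :
    Zfun ~[atTop] fun p ↦ √3 / (96 * √π) * 12 ^ p * (p : ℝ) ^ (-(5 / 2 : ℝ)) := by
  rw [← map_add_atTop_eq_nat 2, isEquivalent_map]
  have hden : (fun m : ℕ ↦ 8 * √3 * 2 ^ m * (((m : ℝ) + 1) * ((m : ℝ) + 2))) ~[atTop]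
      fun m ↦ 8 * √3 * 2 ^ m * ((m : ℝ) * m) :=
    IsEquivalent.refl.mul ((natCast_add_isEquivalent 1).mul (natCast_add_isEquivalent 2))
  have hZ := ((IsEquivalent.refl (u := fun m : ℕ ↦ (6 : ℝ) ^ (m + 2))).mul
    centralBinom_isEquivalent).div hden
  have hshift := (IsEquivalent.refl (u := fun m : ℕ ↦ √3 / (96 * √π) * 12 ^ (m + 2))).mul
    ((natCast_add_isEquivalent 2).rpow (fun n ↦ Nat.cast_nonneg n) (r := -(5 / 2 : ℝ))).symm
  refine ((EventuallyEq.trans_isEquivalent ?_ hZ).trans_eventuallyEq ?_).trans hshift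
    |>.congr_right ?_
  · exact Eventually.of_forall fun m ↦ by simp [Zfun_add_two]
  · filter_upwards [eventually_gt_atTop 0] with m hm
    have hm' : (0 : ℝ) < m := Nat.cast_pos.mpr hm
    have h3 : √3 * √3 = 3 := mul_self_sqrt (by norm_num)
    simp only [Pi.mul_apply, Pi.div_apply, Pi.pow_apply]
    rw [rpow_neg_five_div_two hm', sqrt_mul pi_pos.le, show (12 : ℝ) = 6 * 2 by norm_num,
      show (4 : ℝ) = 2 * 2 by norm_num, mul_pow, mul_pow]
    field_simp
    linear_combination (-32 * 2 ^ m : ℝ) * h3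
  · exact Eventually.of_forall fun m ↦ by simp

/-- If `k_p ~ x·p` for a fixed `x ∈ (1/2,1)`, then the transition probability
`b(p,k_p) = 2·Z(p-k_p+1)·Z(k_p)/Z(p)` satisfies
`b(p,k_p) ~ (2t/p^{5/2})·(x(1-x))^{-5/2}` with `t = √3/(8√π)`. -/
theorem transition_asymptotic (x : ℝ) (hx : x ∈ Set.Ioo (1 / 2 : ℝ) 1) (k : ℕ → ℕ)
    (hk : (fun p : ℕ => (k p : ℝ)) ~[atTop] (fun p : ℕ => x * (p : ℝ))) :
    (fun p : ℕ => 2 * Zfun (p - k p + 1) * Zfun (k p) / Zfun p) ~[atTop]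
      (fun p : ℕ => 2 * (Real.sqrt 3 / (8 * Real.sqrt Real.pi)) / (p : ℝ) ^ ((5 : ℝ) / 2) *
        (x * (1 - x)) ^ (-(5 / 2) : ℝ)) := by
  have hx₀ : 0 < x := by linarith [hx.1]
  have hkx := tendsto_div_natCast_of_isEquivalent hk
  have hqk : ∀ᶠ p in atTop, (p - k p + 1) + k p = p + 1 := by
    filter_upwards [eventually_lt_of_tendsto_div_natCast hkx hx.2] with p hp
    omega
  have hb := (IsEquivalent.refl (u := fun _ : ℕ ↦ (2 : ℝ))).mul
    (isEquivalent_mul_div_of_add_eq_succ Zfun_isEquivalent (by positivity) (by norm_num) hqk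
      (tendsto_sub_add_one_div_natCast hkx hx.2) hkx (sub_pos.mpr hx.2) hx₀)
  refine (hb.congr_left (Eventually.of_forall fun p ↦ ?_)).congr_right
    (Eventually.of_forall fun p ↦ ?_)
  · simp only [Pi.mul_apply]
    ring
  · simp only [Pi.mul_apply]
    rw [rpow_neg (Nat.cast_nonneg p), mul_comm (1 - x) x]
    field_simp
    ring
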